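/- arXiv:1309.5522 — 2 statements merged into one kernel-verified Lean document; each statement's English description precedes it below -/
import Mathlib

section
/- Let K be a maximal chunk of a history H whose forward zones form a chain with no three zones sharing a common point and no zone overlapping three others. If T is a viable total order over the dictating writes of the forward clusters of K, then T equals T_F or T_F', where T_F orders these writes by increasing low endpoint of their forward zones and T_F' is T_F with its first two elements swapped. -/
open scoped Classical

/-- An operation on a single register. -/
structure Op where
  s : ℝ
  f : ℝ
  isRead : Bool
  val : ℕ

abbrev History := Finset Op

def Op.isWrite (op : Op) : Prop := op.isRead = false

/-- Well-formedness of a history: operations have positive duration, all endpoints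
are distinct, writes have distinct values, and every read has a dictating write
that finishes before the read starts. -/
def Wf (H : History) : Prop :=
  (∀ op ∈ H, op.s < op.f) ∧
  (∀ op1 ∈ H, ∀ op2 ∈ H, op1 ≠ op2 →
    op1.s ≠ op2.s ∧ op1.f ≠ op2.f ∧ op1.s ≠ op2.f) ∧
  (∀ w1 ∈ H, ∀ w2 ∈ H, w1.isWrite → w2.isWrite → w1.val = w2.val → w1 = w2) ∧
  (∀ r ∈ H, r.isRead = true → ∃ w ∈ H, w.isWrite ∧ w.val = r.val ∧ w.f < r.s)

/-- `a` occurs before `b` in the total order represented by the list `l`. -/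
def Before (l : List Op) (a b : Op) : Prop :=
  ∃ l1 l2 l3, l = l1 ++ a :: l2 ++ b :: l3

/-- A total order (list) is valid if it respects real-time precedence. -/
def Valid (l : List Op) : Prop :=
  ∀ a ∈ l, ∀ b ∈ l, a.f < b.s → Before l a b

/-- `l` is a total order on exactly the operations of `H`. -/
def IsLinearization (H : History) (l : List Op) : Prop :=
  l.Nodup ∧ ∀ op, op ∈ l ↔ op ∈ H

/-- In the total order `l`, every read follows its dictating write, separated from
it by at most `k - 1` other writes. -/
def KAtomicOrder (k : ℕ) (l : List Op) : Prop :=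
  ∀ r ∈ l, r.isRead = true → ∀ w ∈ l, w.isWrite → w.val = r.val →
    ∃ l1 l2 l3, l = l1 ++ w :: l2 ++ r :: l3 ∧
      (l2.filter (fun op => op.isRead = false)).length ≤ k - 1

/-- A history is `k`-atomic if it has a valid `k`-atomic total order. -/
def KAtomic (k : ℕ) (H : History) : Prop :=
  ∃ l, IsLinearization H l ∧ Valid l ∧ KAtomicOrder k l

/-- The cluster of a write `w`: the write together with its dictated reads. -/
noncomputable def cluster (H : History) (w : Op) : Finset Op :=
  insert w (H.filter (fun r => r.isRead = true ∧ r.val = w.val))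

/-- Minimum finish time over the cluster of `w`. -/
noncomputable def fmin (H : History) (w : Op) : ℝ :=
  (cluster H w).inf' (Finset.insert_nonempty _ _) Op.f

/-- Maximum start time over the cluster of `w`. -/
noncomputable def smax (H : History) (w : Op) : ℝ :=
  (cluster H w).sup' (Finset.insert_nonempty _ _) Op.s

/-- The zone of `w`'s cluster is forward if its minimum finish time is less than
its maximum start time. -/
def ForwardZone (H : History) (w : Op) : Prop := fmin H w < smax H w

/-- Low endpoint of the zone of `w`'s cluster. -/
noncomputable def zoneL (H : History) (w : Op) : ℝ := min (fmin H w) (smax H w)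

/-- High endpoint of the zone of `w`'s cluster. -/
noncomputable def zoneH (H : History) (w : Op) : ℝ := max (fmin H w) (smax H w)

/-- The zone of `w`'s cluster, as a closed interval of time. -/
noncomputable def zone (H : History) (w : Op) : Set ℝ := Set.Icc (zoneL H w) (zoneH H w)

/-- Union of the forward zones of the clusters (identified by their dictating
writes) in `K`. -/
def fwdUnion (H : History) (K : Finset Op) : Set ℝ :=
  ⋃ w ∈ {w ∈ (K : Set Op) | ForwardZone H w}, zone H w

/-- Union of the backward zones of the clusters in `K`. -/
def bwdUnion (H : History) (K : Finset Op) : Set ℝ :=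
  ⋃ w ∈ {w ∈ (K : Set Op) | ¬ ForwardZone H w}, zone H w

/-- A chunk: a set of clusters (identified by their dictating writes) whose
forward zones union to a continuous nonempty time interval containing the
union of the chunk's backward zones. -/
def IsChunk (H : History) (K : Finset Op) : Prop :=
  (∀ w ∈ K, w ∈ H ∧ w.isWrite) ∧
  (fwdUnion H K).Nonempty ∧ (fwdUnion H K).OrdConnected ∧
  bwdUnion H K ⊆ fwdUnion H K

/-- A maximal chunk: no further cluster can be added while remaining a chunk. -/
def MaximalChunk (H : History) (K : Finset Op) : Prop :=
  IsChunk H K ∧ ∀ w ∈ H, w.isWrite → w ∉ K → ¬ IsChunk H (insert w K)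

/-- A chunk set of `H`: a set of maximal chunks covering every forward cluster. -/
def ChunkSet (H : History) (CS : Finset (Finset Op)) : Prop :=
  (∀ K ∈ CS, MaximalChunk H K) ∧
  ∀ w ∈ H, w.isWrite → ForwardZone H w → ∃ K ∈ CS, w ∈ K

/-- The projection `H|K` of `H` onto the chunk `K`: all operations of clusters in `K`. -/
noncomputable def proj (H : History) (K : Finset Op) : History :=
  H.filter (fun op => ∃ w ∈ K, op ∈ cluster H w)

/-- A total order `T` on a set of writes is viable if it extends to a valid total
order `T'` on those writes together with all their dictated reads in `H`, in which
every read follows its dictating write with at most one other write in between. -/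
def Viable (H : History) (T : List Op) : Prop :=
  ∃ T' : List Op, T'.Nodup ∧
    (∀ op, op ∈ T' ↔ op ∈ T ∨ (op ∈ H ∧ op.isRead = true ∧ ∃ w ∈ T, w.val = op.val)) ∧
    Valid T' ∧ T'.filter (fun op => op.isRead = false) = T ∧ KAtomicOrder 2 T'

/-- `T` is a valid total order on exactly the writes in `K`. -/
def TotalOrderOn (K : Finset Op) (T : List Op) : Prop :=
  T.Nodup ∧ (∀ w, w ∈ T ↔ w ∈ K) ∧ Valid T

/-- Swap the first two elements of a list. -/
def swapFirstTwo : List Op → List Op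
  | a :: b :: t => b :: a :: t
  | l => l

/-! Let `u₀, …, uₙ₋₁` be the forward writes of `K` listed by finish time, i.e. by the low end of
their zones. If the finish of a write `b` lies before the last read of `a`'s cluster starts, every
viable order puts `b` at most one place after `a`: `b` precedes that read, and at most one write
separates the read from `a`. This applies to `uⱼ` and `uᵢ` for every `j < i`, and, since the
forward zones of a chunk cover an interval, each `uᵢ` (`i > 0`) starts inside some earlier zone;
as no zone meets three others, that earlier zone is the one of `uᵢ₋₁`, except possibly for
`i = 2`. The only permutations compatible with these constraints are the identity and the swap of
the first two positions. -/

open Set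

section ListPositions

variable {l l₁ l₂ l₃ : List Op} {a b ρ : Op}

lemma idxOf_append_cons_of_nodup (hl : (l₁ ++ a :: l₂).Nodup) :
    (l₁ ++ a :: l₂).idxOf a = l₁.length := by
  have ha : a ∉ l₁ := fun h => List.disjoint_of_nodup_append hl h List.mem_cons_self
  simp [List.idxOf_append_of_notMem ha]

lemma Before.idxOf_lt (hl : l.Nodup) (h : Before l a b) : l.idxOf a < l.idxOf b := by
  obtain ⟨l₁, l₂, l₃, rfl⟩ := h
  have hb := idxOf_append_cons_of_nodup hl
  have ha := idxOf_append_cons_of_nodup (l₂ := l₂ ++ b :: l₃) (by simpa using hl)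
  simp only [List.append_assoc, List.cons_append, List.length_append, List.length_cons] at ha hb ⊢
  omega

lemma idxOf_filter_le_of_before (p : Op → Bool) (hl : l.Nodup)
    (hdec : l = l₁ ++ a :: l₂ ++ ρ :: l₃) (ha : p a = true) (hρ : p ρ = false)
    (hwin : (l₂.filter p).length ≤ 1) (hb : b ∈ l.filter p) (hbρ : Before l b ρ) :
    (l.filter p).idxOf b ≤ (l.filter p).idxOf a + 1 := by
  have hbP : b ∈ l₁ ++ a :: l₂ := by
    by_contra hbP
    have h := hbρ.idxOf_lt hl
    rw [hdec, idxOf_append_cons_of_nodup (hdec ▸ hl), List.idxOf_append_of_notMem hbP] at h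
    omega
  have hfilter : l.filter p = (l₁.filter p ++ a :: l₂.filter p) ++ l₃.filter p := by
    simp [hdec, List.filter_append, ha, hρ]
  have hnd : (l₁.filter p ++ a :: l₂.filter p).Nodup :=
    List.Nodup.of_append_left (l₂ := l₃.filter p) (hfilter ▸ hl.filter p)
  have hbF : b ∈ l₁.filter p ++ a :: l₂.filter p := by
    have hpb : p b = true := (List.mem_filter.1 hb).2
    simp only [List.mem_append, List.mem_cons, List.mem_filter] at hbP ⊢
    tauto
  have hlt := List.idxOf_lt_length_of_mem hbF
  rw [hfilter, List.idxOf_append_of_mem hbF,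
    List.idxOf_append_of_mem (a := a) (l₂ := l₃.filter p) (by simp), idxOf_append_cons_of_nodup hnd]
  simp only [List.length_append, List.length_cons] at hlt
  omega

end ListPositions

section Clusters

variable {H : History} {w : Op}

lemma fmin_eq_f (hWf : Wf H) (hw : w ∈ H) (hww : w.isWrite) : fmin H w = w.f := by
  refine le_antisymm (Finset.inf'_le _ (Finset.mem_insert_self _ _))
    (Finset.le_inf' _ _ fun op hop => ?_)
  rcases Finset.mem_insert.1 hop with rfl | hop
  · exact le_rfl
  obtain ⟨hopH, hread, hval⟩ := Finset.mem_filter.1 hop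
  obtain ⟨w', hw'H, hw'w, hw'val, hw'f⟩ := hWf.2.2.2 op hopH hread
  obtain rfl : w' = w := hWf.2.2.1 w' hw'H w hw hw'w hww (hw'val.trans hval)
  exact (hw'f.trans (hWf.1 op hopH)).le

lemma exists_read_s_eq_smax (hWf : Wf H) (hw : w ∈ H) (hww : w.isWrite)
    (hfz : ForwardZone H w) : ∃ ρ ∈ H, ρ.isRead = true ∧ ρ.val = w.val ∧ ρ.s = smax H w := by
  obtain ⟨ρ, hρ, hρs⟩ := (cluster H w).exists_mem_eq_sup' (Finset.insert_nonempty _ _) Op.s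
  rcases Finset.mem_insert.1 hρ with rfl | hρ
  · have hlt : fmin H ρ < smax H ρ := hfz
    rw [fmin_eq_f hWf hw hww, smax, hρs] at hlt
    exact absurd (hlt.trans (hWf.1 ρ hw)) (lt_irrefl _)
  · obtain ⟨hρH, hρr, hρval⟩ := Finset.mem_filter.1 hρ
    exact ⟨ρ, hρH, hρr, hρval, hρs.symm⟩

lemma smax_ne_fmin (hWf : Wf H) {v : Op} (hw : w ∈ H) (hww : w.isWrite) (hfz : ForwardZone H w)
    (hv : v ∈ H) (hvw : v.isWrite) : smax H w ≠ fmin H v := by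
  obtain ⟨ρ, hρH, hρr, -, hρs⟩ := exists_read_s_eq_smax hWf hw hww hfz
  have hρv : ρ ≠ v := by
    rintro rfl
    simp [Op.isWrite, hρr] at hvw
  rw [← hρs, fmin_eq_f hWf hv hvw]
  exact (hWf.2.1 ρ hρH v hv hρv).2.2

lemma zone_eq_Icc (hfz : ForwardZone H w) : zone H w = Icc (fmin H w) (smax H w) := by
  rw [zone, zoneL, zoneH, min_eq_left hfz.le, max_eq_right hfz.le]

end Clusters

lemma Viable.nodup {H : History} {T : List Op} (hT : Viable H T) : T.Nodup := by
  obtain ⟨T', hnd, -, -, rfl, -⟩ := hT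
  exact hnd.filter _

lemma Viable.idxOf_le_idxOf_add_one {H : History} {T : List Op} (hWf : Wf H) (hT : Viable H T)
    (hTw : ∀ w ∈ T, w ∈ H ∧ w.isWrite ∧ ForwardZone H w) {a b : Op} (ha : a ∈ T) (hb : b ∈ T)
    (hlt : fmin H b < smax H a) : T.idxOf b ≤ T.idxOf a + 1 := by
  obtain ⟨haH, haw, hfz⟩ := hTw a ha
  obtain ⟨hbH, hbw, -⟩ := hTw b hb
  obtain ⟨T', hnd, hmem, hvalid, hfilter, hatomic⟩ := hT
  obtain ⟨ρ, hρH, hρr, hρval, hρs⟩ := exists_read_s_eq_smax hWf haH haw hfz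
  have hρ : ρ ∈ T' := (hmem ρ).2 (Or.inr ⟨hρH, hρr, a, ha, hρval.symm⟩)
  obtain ⟨l₁, l₂, l₃, hdec, hwin⟩ := hatomic ρ hρ hρr a ((hmem a).2 (Or.inl ha)) haw hρval.symm
  have hbρ : Before T' b ρ := hvalid b ((hmem b).2 (Or.inl hb)) ρ hρ
    (by rwa [hρs, ← fmin_eq_f hWf hbH hbw])
  subst hfilter
  exact idxOf_filter_le_of_before _ hnd hdec (by simpa [Op.isWrite] using haw)
    (by simpa using hρr) hwin hb hbρ

section IntervalChain

variable {n : ℕ} {f s : ℕ → ℝ}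

lemma exists_lt_of_ordConnected_biUnion (hf : StrictMonoOn f (Iio n))
    (hfs : ∀ i < n, f i < s i) (hne : ∀ i < n, ∀ j < n, s j ≠ f i)
    (hconn : (⋃ k < n, Icc (f k) (s k)).OrdConnected) {i : ℕ} (hi0 : 0 < i) (hi : i < n) :
    ∃ j < i, f i < s j := by
  by_contra! hgap
  obtain ⟨m, hm, hmax⟩ := (Finset.range i).exists_max_image s (Finset.nonempty_range_iff.2 hi0.ne')
  rw [Finset.mem_range] at hm
  have hsm : ∀ j < i, s j ≤ s m := fun j hj => hmax j (Finset.mem_range.2 hj)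
  have hmi : s m < f i := (hgap m hm).lt_of_ne (hne i hi m (hm.trans hi))
  obtain ⟨t, hmt, hti⟩ := exists_between hmi
  have ht : t ∈ ⋃ k < n, Icc (f k) (s k) := by
    refine hconn.out (mem_biUnion (x := 0) (hi0.trans hi) ⟨le_rfl, (hfs 0 (hi0.trans hi)).le⟩)
      (mem_biUnion (x := i) hi ⟨le_rfl, (hfs i hi).le⟩) ⟨?_, ?_⟩
    · linarith [hfs 0 (hi0.trans hi), hsm 0 hi0]
    · linarith
  simp only [mem_iUnion, mem_Icc] at ht
  obtain ⟨k, hk, hfk, hks⟩ := ht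
  rcases lt_or_ge k i with hki | hik
  · linarith [hsm k hki]
  · have := hf.monotoneOn (mem_Iio.2 hi) (mem_Iio.2 hk) hik
    linarith

lemma exists_pred_lt_of_not_meets_three (hf : StrictMonoOn f (Iio n))
    (hfs : ∀ i < n, f i < s i) (hgap : ∀ i, 0 < i → i < n → ∃ j < i, f i < s j)
    (hfour : ∀ i < n, ∀ a < n, ∀ b < n, ∀ c < n, a ≠ b → a ≠ c → b ≠ c → a ≠ i → b ≠ i → c ≠ i →
      (Icc (f i) (s i) ∩ Icc (f a) (s a)).Nonempty → (Icc (f i) (s i) ∩ Icc (f b) (s b)).Nonempty →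
      ¬ (Icc (f i) (s i) ∩ Icc (f c) (s c)).Nonempty)
    {i : ℕ} (hi0 : 0 < i) (hi : i < n) :
    ∃ j < i, (j + 1 = i ∨ i = 2) ∧ f i < s j := by
  obtain ⟨j, hji, hj⟩ := hgap i hi0 hi
  by_cases hshort : j + 1 = i ∨ i = 2
  · exact ⟨j, hji, hshort, hj⟩
  exfalso
  have hmeet : ∀ k l, k ≤ l → l < n → f l ≤ s k →
      (Icc (f k) (s k) ∩ Icc (f l) (s l)).Nonempty := fun k l hkl hl h =>
    ⟨f l, ⟨hf.monotoneOn (mem_Iio.2 (by omega)) (mem_Iio.2 hl) hkl, h⟩, le_rfl, (hfs l hl).le⟩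
  have hmeet_j : ∀ k, j ≤ k → k ≤ i → (Icc (f j) (s j) ∩ Icc (f k) (s k)).Nonempty :=
    fun k hjk hki => hmeet j k hjk (by omega)
      ((hf.monotoneOn (mem_Iio.2 (by omega)) (mem_Iio.2 hi) hki).trans hj.le)
  -- zone `j` already meets zones `j + 1` and `j + 2`; a third one is zone `j + 3` or,
  -- when `j + 2 = i`, the earlier zone containing `f j` given by `hgap`
  obtain ⟨m, hm, hmj, hmj1, hmj2, hjm⟩ : ∃ m < n, m ≠ j ∧ m ≠ j + 1 ∧ m ≠ j + 2 ∧
      (Icc (f j) (s j) ∩ Icc (f m) (s m)).Nonempty := by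
    by_cases h3 : j + 3 ≤ i
    · exact ⟨j + 3, by omega, by omega, by omega, by omega, hmeet_j _ (by omega) h3⟩
    · obtain ⟨m, hmj, hm⟩ := hgap j (by omega) (by omega)
      exact ⟨m, by omega, by omega, by omega, by omega,
        inter_comm (Icc (f m) (s m)) _ ▸ hmeet m j hmj.le (by omega) hm.le⟩
  exact hfour j (by omega) (j + 1) (by omega) (j + 2) (by omega) m hm (by omega) (by omega)
    (by omega) (by omega) (by omega) hmj (hmeet_j _ (by omega) (by omega))
    (hmeet_j _ (by omega) (by omega)) hjm

end IntervalChain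

section SortedForwardWrites

variable {H : History} {K : Finset Op} {TF : List Op}

lemma nodup_of_pairwise_fmin_lt (hsorted : TF.Pairwise (fun a b => fmin H a < fmin H b)) :
    TF.Nodup :=
  hsorted.imp fun h => ne_of_apply_ne (fmin H) h.ne

lemma strictMonoOn_fmin_getD (hsorted : TF.Pairwise (fun a b => fmin H a < fmin H b)) (d : Op) :
    StrictMonoOn (fun i => fmin H (TF.getD i d)) (Iio TF.length) := by
  intro i hi j hj hij
  simp only [List.getD_eq_getElem _ _ hi, List.getD_eq_getElem _ _ hj]
  exact List.pairwise_iff_getElem.1 hsorted i j hi hj hij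

lemma fwdUnion_eq_biUnion (hTFmem : ∀ w, w ∈ TF ↔ w ∈ K ∧ ForwardZone H w) (d : Op) :
    fwdUnion H K = ⋃ k < TF.length, zone H (TF.getD k d) := by
  ext t
  simp only [fwdUnion, mem_iUnion, mem_ofPred_eq, Finset.mem_coe, exists_prop, ← hTFmem]
  constructor
  · rintro ⟨w, hw, ht⟩
    obtain ⟨k, hk, rfl⟩ := List.mem_iff_getElem.1 hw
    exact ⟨k, hk, by rwa [List.getD_eq_getElem _ _ hk]⟩
  · rintro ⟨k, hk, ht⟩
    exact ⟨_, List.getD_eq_getElem _ _ hk ▸ List.getElem_mem hk, ht⟩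

lemma exists_pred_fmin_lt_smax (hWf : Wf H)
    (hKw : ∀ w ∈ K, w ∈ H ∧ w.isWrite) (hconn : (fwdUnion H K).OrdConnected)
    (hNoFour : ∀ w ∈ K, ForwardZone H w →
      ¬ ∃ w1 ∈ K, ∃ w2 ∈ K, ∃ w3 ∈ K, w1 ≠ w2 ∧ w1 ≠ w3 ∧ w2 ≠ w3 ∧
        w1 ≠ w ∧ w2 ≠ w ∧ w3 ≠ w ∧
        ForwardZone H w1 ∧ ForwardZone H w2 ∧ ForwardZone H w3 ∧
        (zone H w ∩ zone H w1).Nonempty ∧ (zone H w ∩ zone H w2).Nonempty ∧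
        (zone H w ∩ zone H w3).Nonempty)
    (hTFmem : ∀ w, w ∈ TF ↔ w ∈ K ∧ ForwardZone H w)
    (hsorted : TF.Pairwise (fun a b => fmin H a < fmin H b)) (d : Op) {i : ℕ} (hi0 : 0 < i)
    (hi : i < TF.length) :
    ∃ j < i, (j + 1 = i ∨ i = 2) ∧ fmin H (TF.getD i d) < smax H (TF.getD j d) := by
  have hget : ∀ k (hk : k < TF.length), TF.getD k d = TF[k] := fun k hk =>
    List.getD_eq_getElem _ _ hk
  have hK : ∀ k < TF.length, TF.getD k d ∈ K ∧ ForwardZone H (TF.getD k d) := fun k hk =>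
    (hTFmem _).1 (hget k hk ▸ List.getElem_mem hk)
  have hzone : ∀ k < TF.length,
      zone H (TF.getD k d) = Icc (fmin H (TF.getD k d)) (smax H (TF.getD k d)) := fun k hk =>
    zone_eq_Icc (hK k hk).2
  have hmono := strictMonoOn_fmin_getD hsorted d
  have hfs : ∀ k < TF.length, fmin H (TF.getD k d) < smax H (TF.getD k d) := fun k hk =>
    (hK k hk).2
  have hne : ∀ k < TF.length, ∀ j < TF.length, smax H (TF.getD j d) ≠ fmin H (TF.getD k d) :=
    fun k hk j hj => smax_ne_fmin hWf (hKw _ (hK j hj).1).1 (hKw _ (hK j hj).1).2 (hK j hj).2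
      (hKw _ (hK k hk).1).1 (hKw _ (hK k hk).1).2
  rw [fwdUnion_eq_biUnion hTFmem d, iUnion₂_congr hzone] at hconn
  refine exists_pred_lt_of_not_meets_three hmono hfs
    (fun k hk0 hk => exists_lt_of_ordConnected_biUnion hmono hfs hne hconn hk0 hk) ?_ hi0 hi
  intro c hc a ha b hb e he hab hae hbe hac hbc hec hma hmb hme
  have hinj : ∀ k < TF.length, ∀ l < TF.length, k ≠ l → TF.getD k d ≠ TF.getD l d :=
    fun k hk l hl hkl => by
      rw [hget k hk, hget l hl]
      exact fun h => hkl ((nodup_of_pairwise_fmin_lt hsorted).getElem_inj_iff.1 h)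
  rw [← hzone c hc, ← hzone a ha] at hma
  rw [← hzone c hc, ← hzone b hb] at hmb
  rw [← hzone c hc, ← hzone e he] at hme
  exact hNoFour _ (hK c hc).1 (hK c hc).2 ⟨_, (hK a ha).1, _, (hK b hb).1, _, (hK e he).1,
    hinj a ha b hb hab, hinj a ha e he hae, hinj b hb e he hbe, hinj a ha c hc hac,
    hinj b hb c hc hbc, hinj e he c hc hec, (hK a ha).2, (hK b hb).2, (hK e he).2, hma, hmb, hme⟩

end SortedForwardWrites

lemma eq_id_or_swap_of_bijOn {n : ℕ} {p : ℕ → ℕ} (hp : BijOn p (Iio n) (Iio n))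
    (hdesc : ∀ j i, j < i → i < n → p j ≤ p i + 1)
    (hpred : ∀ i, 0 < i → i < n → ∃ j < i, (j + 1 = i ∨ i = 2) ∧ p i ≤ p j + 1) :
    (∀ i < n, p i = i) ∨ 2 ≤ n ∧ ∀ i < n, p i = Equiv.swap 0 1 i := by
  have hinj : ∀ i < n, ∀ j < n, p i = p j → i = j := fun i hi j hj h =>
    hp.injOn (mem_Iio.2 hi) (mem_Iio.2 hj) h
  have hhead : ∀ m < n, m ≤ 1 → p m ≤ 1 := by
    intro m hm hm1
    obtain ⟨k, hk, hpk⟩ := hp.surjOn (mem_Iio.2 (show 0 < n by omega))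
    rw [mem_Iio] at hk
    rcases lt_trichotomy m k with hmk | rfl | hkm
    · have := hdesc m k hmk hk
      omega
    · omega
    · obtain ⟨j, hj, -, hle⟩ := hpred m (by omega) hm
      obtain rfl : j = k := by omega
      omega
  rcases Nat.lt_or_ge n 2 with hn | hn
  · left
    intro i hi
    have := hp.mapsTo (mem_Iio.2 hi)
    rw [mem_Iio] at this
    omega
  have h0 := hhead 0 (by omega) zero_le_one
  have h1 := hhead 1 (by omega) le_rfl
  have h01 := mt (hinj 0 (by omega) 1 (by omega)) (by omega)
  have htail : ∀ i < n, 2 ≤ i → p i = i := by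
    intro i
    induction i using Nat.strong_induction_on with
    | _ i ih =>
      intro hi h2
      -- positions `0, …, i - 1` are taken by the first `i` elements
      have hge : i ≤ p i := by
        by_contra! hlt
        by_cases hsmall : p i < 2
        · have hi0 := mt (hinj i hi 0 (by omega)) (by omega)
          have hi1 := mt (hinj i hi 1 (by omega)) (by omega)
          omega
        · have := hinj _ (by omega) i hi (ih (p i) hlt (by omega) (by omega))
          omega
      obtain ⟨j, hji, hj, hle⟩ := hpred i (by omega) hi
      by_cases hj2 : 2 ≤ j
      · have := ih j hji (by omega) hj2
        omega
      · have := hhead j (by omega) (by omega)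
        omega
  rcases (by omega : p 0 = 0 ∧ p 1 = 1 ∨ p 0 = 1 ∧ p 1 = 0) with ⟨e0, e1⟩ | ⟨e0, e1⟩
  · left
    intro i hi
    rcases (by omega : i = 0 ∨ i = 1 ∨ 2 ≤ i) with rfl | rfl | h2
    exacts [e0, e1, htail i hi h2]
  · refine Or.inr ⟨hn, fun i hi => ?_⟩
    rcases (by omega : i = 0 ∨ i = 1 ∨ 2 ≤ i) with rfl | rfl | h2
    · simpa using e0
    · simpa using e1
    · rw [htail i hi h2, Equiv.swap_apply_of_ne_of_ne (by omega) (by omega)]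

lemma eq_of_idxOf_getD_eq {T L : List Op} (d : Op) (hlen : T.length = L.length)
    (h : ∀ i < L.length, T.idxOf (L.getD i d) = i) : T = L := by
  refine List.ext_getElem hlen fun i hiT hiL => ?_
  have hi := h i hiL
  rw [List.getD_eq_getElem _ _ hiL] at hi
  simpa only [hi] using List.getElem_idxOf (by rwa [hi] : T.idxOf L[i] < T.length)

lemma length_swapFirstTwo (L : List Op) : (swapFirstTwo L).length = L.length := by
  unfold swapFirstTwo
  split <;> simp

lemma getD_swapFirstTwo {L : List Op} (hL : 2 ≤ L.length) (d : Op) (i : ℕ) :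
    (swapFirstTwo L).getD i d = L.getD (Equiv.swap 0 1 i) d := by
  match L, hL with
  | a :: b :: t, _ =>
    rcases i with _ | _ | i
    · simp [swapFirstTwo]
    · simp [swapFirstTwo]
    · rw [Equiv.swap_apply_of_ne_of_ne (by omega) (by omega)]
      rfl

lemma eq_or_eq_swapFirstTwo_of_idxOf_le {T L : List Op} (d : Op) (hT : T.Nodup) (hL : L.Nodup)
    (hmem : ∀ x, x ∈ T ↔ x ∈ L)
    (hdesc : ∀ j i, j < i → i < L.length → T.idxOf (L.getD j d) ≤ T.idxOf (L.getD i d) + 1)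
    (hpred : ∀ i, 0 < i → i < L.length → ∃ j < i, (j + 1 = i ∨ i = 2) ∧
      T.idxOf (L.getD i d) ≤ T.idxOf (L.getD j d) + 1) :
    T = L ∨ T = swapFirstTwo L := by
  have hlen : T.length = L.length := ((List.perm_ext_iff_of_nodup hT hL).2 hmem).length_eq
  have hget : ∀ i (hi : i < L.length), L.getD i d = L[i] := fun i hi => List.getD_eq_getElem _ _ hi
  have hbij : BijOn (fun i => T.idxOf (L.getD i d)) (Iio L.length) (Iio L.length) := by
    refine ⟨fun i hi => ?_, fun i hi j hj hij => ?_, fun k hk => ?_⟩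
    · rw [mem_Iio] at hi ⊢
      rw [← hlen, List.idxOf_lt_length_iff, hmem, hget i hi]
      exact List.getElem_mem hi
    · rw [mem_Iio] at hi hj
      simp only [hget i hi, hget j hj] at hij
      exact (hL.getElem_inj_iff).1 ((List.idxOf_inj ((hmem _).2 (List.getElem_mem hi))).1 hij)
    · rw [mem_Iio, ← hlen] at hk
      obtain ⟨i, hi, hiT⟩ := List.mem_iff_getElem.1 ((hmem _).1 (List.getElem_mem hk))
      exact ⟨i, hi, by simp only [hget i hi, hiT, hT.idxOf_getElem]⟩
  rcases eq_id_or_swap_of_bijOn hbij hdesc hpred with hid | ⟨h2, hswap⟩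
  · exact Or.inl (eq_of_idxOf_getD_eq d hlen hid)
  · right
    refine eq_of_idxOf_getD_eq d (by rw [length_swapFirstTwo, hlen]) fun i hi => ?_
    rw [length_swapFirstTwo] at hi
    have hswap_lt : Equiv.swap 0 1 i < L.length := by
      rw [Equiv.swap_apply_def]
      split_ifs <;> omega
    rw [getD_swapFirstTwo h2, hswap _ hswap_lt, Equiv.swap_apply_self]

theorem stmt_5_general (H : History) (hWf : Wf H) (K : Finset Op) (hK : MaximalChunk H K)
    (hNoFour : ∀ w ∈ K, ForwardZone H w →
      ¬ ∃ w1 ∈ K, ∃ w2 ∈ K, ∃ w3 ∈ K, w1 ≠ w2 ∧ w1 ≠ w3 ∧ w2 ≠ w3 ∧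
        w1 ≠ w ∧ w2 ≠ w ∧ w3 ≠ w ∧
        ForwardZone H w1 ∧ ForwardZone H w2 ∧ ForwardZone H w3 ∧
        (zone H w ∩ zone H w1).Nonempty ∧ (zone H w ∩ zone H w2).Nonempty ∧
        (zone H w ∩ zone H w3).Nonempty)
    (TF : List Op)
    (hTFmem : ∀ w, w ∈ TF ↔ w ∈ K ∧ ForwardZone H w)
    (hTFsorted : TF.Pairwise (fun a b => fmin H a < fmin H b))
    (T : List Op)
    (hTmem : ∀ w, w ∈ T ↔ w ∈ K ∧ ForwardZone H w)
    (hTviable : Viable H T) :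
    T = TF ∨ T = swapFirstTwo TF := by
  obtain ⟨⟨hKw, -, hconn, -⟩, -⟩ := hK
  have hTw : ∀ w ∈ T, w ∈ H ∧ w.isWrite ∧ ForwardZone H w := fun w hw =>
    have hw' := (hTmem w).1 hw
    ⟨(hKw w hw'.1).1, (hKw w hw'.1).2, hw'.2⟩
  -- `d` is only the default value of `List.getD`; every index used below is in range
  let d : Op := ⟨0, 0, false, 0⟩
  have hmem : ∀ i < TF.length, TF.getD i d ∈ T := fun i hi =>
    (hTmem _).2 ((hTFmem _).1 (List.getD_eq_getElem _ _ hi ▸ List.getElem_mem hi))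
  refine eq_or_eq_swapFirstTwo_of_idxOf_le d hTviable.nodup (nodup_of_pairwise_fmin_lt hTFsorted)
    (fun w => (hTmem w).trans (hTFmem w).symm) (fun j i hji hi => ?_) (fun i hi0 hi => ?_)
  · have hlt := strictMonoOn_fmin_getD hTFsorted d (mem_Iio.2 (hji.trans hi)) (mem_Iio.2 hi) hji
    exact hTviable.idxOf_le_idxOf_add_one hWf hTw (hmem i hi) (hmem j (hji.trans hi))
      (hlt.trans (hTw _ (hmem i hi)).2.2)
  · obtain ⟨j, hji, hj, hlt⟩ :=
      exists_pred_fmin_lt_smax hWf hKw hconn hNoFour hTFmem hTFsorted d hi0 hi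
    exact ⟨j, hji, hj,
      hTviable.idxOf_le_idxOf_add_one hWf hTw (hmem j (hji.trans hi)) (hmem i hi) hlt⟩

/-- If the forward zones of a maximal chunk `K` form a chain (no three zones share
a common point, no zone overlaps three others), then any viable total order `T`
over the dictating writes of the forward clusters of `K` equals `T_F` (writes in
increasing order of low endpoint of their forward zones) or `T_F'` (`T_F` with the
first two elements swapped). -/
theorem stmt_5 (H : History) (hWf : Wf H) (K : Finset Op) (hK : MaximalChunk H K)
    (hNoTriple : ∀ w1 ∈ K, ∀ w2 ∈ K, ∀ w3 ∈ K, w1 ≠ w2 → w1 ≠ w3 → w2 ≠ w3 →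
      ForwardZone H w1 → ForwardZone H w2 → ForwardZone H w3 →
      ¬ ∃ t : ℝ, t ∈ zone H w1 ∧ t ∈ zone H w2 ∧ t ∈ zone H w3)
    (hNoFour : ∀ w ∈ K, ForwardZone H w →
      ¬ ∃ w1 ∈ K, ∃ w2 ∈ K, ∃ w3 ∈ K, w1 ≠ w2 ∧ w1 ≠ w3 ∧ w2 ≠ w3 ∧
        w1 ≠ w ∧ w2 ≠ w ∧ w3 ≠ w ∧
        ForwardZone H w1 ∧ ForwardZone H w2 ∧ ForwardZone H w3 ∧
        (zone H w ∩ zone H w1).Nonempty ∧ (zone H w ∩ zone H w2).Nonempty ∧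
        (zone H w ∩ zone H w3).Nonempty)
    (TF : List Op) (hTFnd : TF.Nodup)
    (hTFmem : ∀ w, w ∈ TF ↔ w ∈ K ∧ ForwardZone H w)
    (hTFsorted : TF.Pairwise (fun a b => fmin H a < fmin H b))
    (T : List Op) (hTnd : T.Nodup)
    (hTmem : ∀ w, w ∈ T ↔ w ∈ K ∧ ForwardZone H w)
    (hTvalid : Valid T) (hTviable : Viable H T) :
    T = TF ∨ T = swapFirstTwo TF :=
  stmt_5_general H hWf K hK hNoFour TF hTFmem hTFsorted T hTmem hTviable
end

section
/- Let K be a maximal chunk with at least one forward cluster and exactly two backward clusters with dictating writes w1, w2. In any viable total order T over all writes of K, w1 and w2 cannot both precede all writes of forward clusters of K, and they cannot both succeed all writes of forward clusters of K. -/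
open scoped Classical

/-! Say `u` precedes `v` in `T`, both backward. If both precede every forward write, the low
end `smax u` of `u`'s zone lies in the forward zone of some `w`, so an operation of `w`'s
cluster finishes before an operation `b` of `u`'s cluster starts; hence `w` precedes `b` in the
extension of `T`. As `w` follows `u`, `b` is a read of `u`, and the two writes `v` and `w` lie
between `u` and `b`, contradicting 2-atomicity. Dually, if both follow every forward write, the
high end `fmin v` of `v`'s zone lies in the forward zone of some `w`, `v` precedes a read `b` of
`w`, and `u`, `v` lie between `w` and `b`. -/

namespace Before

variable {l : List Op} {a b c : Op}

lemma mem_left (h : Before l a b) : a ∈ l := by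
  obtain ⟨l1, l2, l3, rfl⟩ := h; simp

lemma mem_right (h : Before l a b) : b ∈ l := by
  obtain ⟨l1, l2, l3, rfl⟩ := h; simp

lemma iff_pair_sublist : Before l a b ↔ [a, b].Sublist l := by
  constructor
  · rintro ⟨l1, l2, l3, rfl⟩
    simp
  · intro h
    obtain ⟨r1, r2, rfl, ha, hb⟩ := List.cons_sublist_iff.1 h
    obtain ⟨p, q, rfl⟩ := List.append_of_mem ha
    obtain ⟨s, t, rfl⟩ := List.append_of_mem (List.singleton_sublist.1 hb)
    exact ⟨p, q ++ s, t, by simp⟩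

lemma of_sublist {l' : List Op} (h : Before l' a b) (hl : l'.Sublist l) : Before l a b :=
  iff_pair_sublist.2 ((iff_pair_sublist.1 h).trans hl)

lemma idxOf_lt_s7 (hl : l.Nodup) (h : Before l a b) : l.idxOf a < l.idxOf b := by
  obtain ⟨l1, l2, l3, rfl⟩ := h
  have hl' : (l1 ++ a :: (l2 ++ b :: l3)).Nodup := by simpa using hl
  obtain ⟨-, hrest, hdisj⟩ := List.nodup_append.1 hl'
  obtain ⟨ha, hrest'⟩ := List.nodup_cons.1 hrest
  have ha1 : a ∉ l1 := fun h => hdisj a h a (by simp) rfl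
  have hb1 : b ∉ l1 := fun h => hdisj b h b (by simp) rfl
  have hab : a ≠ b := by rintro rfl; simp at ha
  have hb2 : b ∉ l2 := fun h => (List.nodup_append.1 hrest').2.2 b h b (by simp) rfl
  rw [List.append_assoc, List.cons_append, List.idxOf_append_of_notMem ha1,
    List.idxOf_append_of_notMem hb1, List.idxOf_cons_self, List.idxOf_cons_ne _ hab,
    List.idxOf_append_of_notMem hb2, List.idxOf_cons_self]
  omega

lemma of_idxOf_lt (hb : b ∈ l) (h : l.idxOf a < l.idxOf b) : Before l a b := by
  induction l with
  | nil => simp at hb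
  | cons x l ih =>
    by_cases hxa : x = a
    · subst hxa
      have hbx : b ≠ x := by rintro rfl; simp at h
      obtain ⟨s, t, rfl⟩ := List.append_of_mem ((List.mem_cons.1 hb).resolve_left hbx)
      exact ⟨[], s, t, rfl⟩
    · have hxb : x ≠ b := by rintro rfl; simp at h
      rw [List.idxOf_cons_ne _ hxa, List.idxOf_cons_ne _ hxb] at h
      exact (ih ((List.mem_cons.1 hb).resolve_left hxb.symm) (by omega)).of_sublist
        (List.sublist_cons_self x l)

lemma irrefl (hl : l.Nodup) : ¬Before l a a :=
  fun h => (h.idxOf_lt_s7 hl).false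

lemma asymm (hl : l.Nodup) (h : Before l a b) : ¬Before l b a :=
  fun h' => (h.idxOf_lt_s7 hl).not_gt (h'.idxOf_lt_s7 hl)

lemma ne (hl : l.Nodup) (h : Before l a b) : a ≠ b := by
  rintro rfl; exact irrefl hl h

lemma trans (hl : l.Nodup) (h₁ : Before l a b) (h₂ : Before l b c) : Before l a c :=
  of_idxOf_lt h₂.mem_right ((h₁.idxOf_lt_s7 hl).trans (h₂.idxOf_lt_s7 hl))

lemma of_mem_left {l₁ l₂ : List Op} (ha : a ∈ l₁) : Before (l₁ ++ b :: l₂) a b := by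
  obtain ⟨s, t, rfl⟩ := List.append_of_mem ha
  exact ⟨s, t, l₂, by simp⟩

lemma of_mem_right {l₁ l₂ : List Op} (hb : b ∈ l₂) : Before (l₁ ++ a :: l₂) a b := by
  obtain ⟨s, t, rfl⟩ := List.append_of_mem hb
  exact ⟨l₁, s, t, by simp⟩

end Before

lemma before_or_before {l : List Op} {a b : Op} (ha : a ∈ l) (hb : b ∈ l) (hab : a ≠ b) :
    Before l a b ∨ Before l b a := by
  rcases lt_or_gt_of_ne (mt (List.idxOf_inj ha).1 hab) with h | h
  · exact Or.inl (Before.of_idxOf_lt hb h)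
  · exact Or.inr (Before.of_idxOf_lt ha h)

lemma mem_of_before_of_before {l₁ l₂ l₃ : List Op} {y b x : Op}
    (hl : (l₁ ++ y :: l₂ ++ b :: l₃).Nodup) (hyx : Before (l₁ ++ y :: l₂ ++ b :: l₃) y x)
    (hxb : Before (l₁ ++ y :: l₂ ++ b :: l₃) x b) : x ∈ l₂ := by
  have hx := hyx.mem_right
  simp only [List.append_assoc, List.cons_append, List.mem_append, List.mem_cons] at hx
  rcases hx with hx | rfl | hx | rfl | hx
  · exact absurd (by simpa using Before.of_mem_left (b := y) (l₂ := l₂ ++ b :: l₃) hx)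
      (hyx.asymm hl)
  · exact absurd hyx (Before.irrefl hl)
  · exact hx
  · exact absurd hxb (Before.irrefl hl)
  · exact absurd (Before.of_mem_right (l₁ := l₁ ++ y :: l₂) (a := b) hx) (hxb.asymm hl)

lemma mem_cluster {H : History} {w x : Op} :
    x ∈ cluster H w ↔ x = w ∨ (x ∈ H ∧ x.isRead = true ∧ x.val = w.val) := by
  simp [cluster]

lemma mem_of_mem_cluster {H : History} {w x : Op} (hw : w ∈ H) (hx : x ∈ cluster H w) :
    x ∈ H := by
  rcases mem_cluster.1 hx with rfl | ⟨hx, -⟩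
  · exact hw
  · exact hx

lemma zone_eq_of_forward {H : History} {w : Op} (hw : ForwardZone H w) :
    zone H w = Set.Icc (fmin H w) (smax H w) := by
  rw [zone, zoneL, zoneH, min_eq_left hw.le, max_eq_right hw.le]

lemma zone_eq_of_not_forward {H : History} {w : Op} (hw : ¬ForwardZone H w) :
    zone H w = Set.Icc (smax H w) (fmin H w) := by
  rw [ForwardZone, not_lt] at hw
  rw [zone, zoneL, zoneH, min_eq_right hw, max_eq_left hw]

namespace Wf

variable {H : History}

lemma ne_of_mem_cluster (hWf : Wf H) {w w' a b : Op} (hw : w ∈ H) (hw' : w' ∈ H)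
    (hwW : w.isWrite) (hw'W : w'.isWrite) (hne : w ≠ w') (ha : a ∈ cluster H w)
    (hb : b ∈ cluster H w') : a ≠ b := by
  have hval : w.val ≠ w'.val := fun h => hne (hWf.2.2.1 w hw w' hw' hwW hw'W h)
  rw [Op.isWrite] at hwW hw'W
  rcases mem_cluster.1 ha with rfl | ⟨-, har, hav⟩ <;>
    rcases mem_cluster.1 hb with rfl | ⟨-, hbr, hbv⟩ <;> rintro rfl
  · exact hne rfl
  · simp_all
  · simp_all
  · exact hval (hav.symm.trans hbv)

lemma f_ne_s (hWf : Wf H) {a b : Op} (ha : a ∈ H) (hb : b ∈ H) (hab : a ≠ b) : a.f ≠ b.s :=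
  (hWf.2.1 b hb a ha hab.symm).2.2.symm

end Wf

namespace KAtomicOrder

variable {H : History} {l : List Op} {k : ℕ}

lemma before_of_mem_cluster (hk : KAtomicOrder k l) (hl : l.Nodup) {w a b : Op}
    (hwW : w.isWrite) (hw : w ∈ l) (ha : a ∈ cluster H w) (hab : Before l a b) :
    Before l w b := by
  rcases mem_cluster.1 ha with rfl | ⟨-, har, hav⟩
  · exact hab
  · obtain ⟨l₁, l₂, l₃, hsplit, -⟩ := hk a hab.mem_left har w hw hwW hav.symm
    exact Before.trans hl ⟨l₁, l₂, l₃, hsplit⟩ hab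

lemma exists_before_of_fmin_le_smax (hk : KAtomicOrder k l) (hWf : Wf H) (hl : l.Nodup)
    (hval : Valid l) {x y : Op} (hx : x ∈ H) (hy : y ∈ H) (hxW : x.isWrite) (hyW : y.isWrite)
    (hxy : x ≠ y) (hcx : ∀ a ∈ cluster H x, a ∈ l) (hcy : ∀ b ∈ cluster H y, b ∈ l)
    (hle : fmin H x ≤ smax H y) : ∃ b ∈ cluster H y, Before l x b := by
  obtain ⟨a, ha, hfa⟩ := Finset.exists_mem_eq_inf' (Finset.insert_nonempty x _) Op.f
  obtain ⟨b, hb, hsb⟩ := Finset.exists_mem_eq_sup' (Finset.insert_nonempty y _) Op.s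
  have hab : a.f < b.s := by
    refine lt_of_le_of_ne ?_ (hWf.f_ne_s (mem_of_mem_cluster hx ha) (mem_of_mem_cluster hy hb)
      (hWf.ne_of_mem_cluster hx hy hxW hyW hxy ha hb))
    rw [← hfa, ← hsb]
    exact hle
  exact ⟨b, hb, hk.before_of_mem_cluster hl hxW (hcx x (Finset.mem_insert_self x _)) ha
    (hval a (hcx a ha) b (hcy b hb) hab)⟩

lemma eq_of_writes_between (hk : KAtomicOrder 2 l) (hl : l.Nodup) {y b x₁ x₂ : Op}
    (hyW : y.isWrite) (hb : b ∈ cluster H y) (hx₁ : x₁.isWrite) (hx₂ : x₂.isWrite)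
    (hyx₁ : Before l y x₁) (hx₁b : Before l x₁ b) (hyx₂ : Before l y x₂)
    (hx₂b : Before l x₂ b) : x₁ = x₂ := by
  rcases mem_cluster.1 hb with rfl | ⟨-, hbr, hbv⟩
  · exact absurd hx₁b (hyx₁.asymm hl)
  obtain ⟨l₁, l₂, l₃, rfl, hlen⟩ := hk b hx₁b.mem_right hbr y hyx₁.mem_left hyW hbv.symm
  have hmem : ∀ x, x.isWrite → Before (l₁ ++ y :: l₂ ++ b :: l₃) y x →
      Before (l₁ ++ y :: l₂ ++ b :: l₃) x b → x ∈ (l₂.filter fun op => op.isRead = false) :=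
    fun x hxW hyx hxb => List.mem_filter.2
      ⟨mem_of_before_of_before hl hyx hxb, by simpa [Op.isWrite] using hxW⟩
  by_contra hne
  have hsub : {x₁, x₂} ⊆ (l₂.filter fun op => op.isRead = false).toFinset := by
    simp only [Finset.insert_subset_iff, Finset.singleton_subset_iff, List.mem_toFinset]
    exact ⟨hmem x₁ hx₁ hyx₁ hx₁b, hmem x₂ hx₂ hyx₂ hx₂b⟩
  have := (Finset.card_pair hne).symm.le.trans
    ((Finset.card_le_card hsub).trans (List.toFinset_card_le _))
  omega

end KAtomicOrder

lemma Viable.exists_extension {H : History} {T : List Op} (hV : Viable H T) :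
    ∃ T' : List Op, T'.Nodup ∧ Valid T' ∧ KAtomicOrder 2 T' ∧
      (∀ w ∈ T, ∀ a ∈ cluster H w, a ∈ T') ∧ ∀ a b, Before T a b → Before T' a b := by
  obtain ⟨T', hl, hmem, hval, hfilter, hk⟩ := hV
  refine ⟨T', hl, hval, hk, fun w hw a ha => ?_, fun a b hab => ?_⟩
  · rcases mem_cluster.1 ha with rfl | ⟨haH, har, hav⟩
    · exact (hmem a).2 (Or.inl hw)
    · exact (hmem a).2 (Or.inr ⟨haH, har, w, hw, hav.symm⟩)
  · rw [← hfilter] at hab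
    exact hab.of_sublist List.filter_sublist

lemma IsChunk.exists_forward_mem_Icc {H : History} {K : Finset Op} (hK : IsChunk H K)
    {u : Op} (hu : u ∈ K) (hub : ¬ForwardZone H u) {t : ℝ}
    (ht : t ∈ Set.Icc (smax H u) (fmin H u)) :
    ∃ w ∈ K, ForwardZone H w ∧ t ∈ Set.Icc (fmin H w) (smax H w) := by
  have hfwd : t ∈ fwdUnion H K :=
    hK.2.2.2 (Set.mem_biUnion (x := u) ⟨hu, hub⟩ ((zone_eq_of_not_forward hub).symm ▸ ht))
  simp only [fwdUnion, Set.mem_iUnion, Set.mem_ofPred_eq, Finset.mem_coe, exists_prop] at hfwd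
  obtain ⟨w, ⟨hwK, hwF⟩, htw⟩ := hfwd
  exact ⟨w, hwK, hwF, zone_eq_of_forward hwF ▸ htw⟩

section Viable

variable {H : History} {K : Finset Op} {T : List Op} {u v : Op}

lemma not_forall_before_forward (hWf : Wf H) (hK : IsChunk H K) (hV : Viable H T)
    (hu : u ∈ K) (huF : ¬ForwardZone H u) (hv : v ∈ K) (hvF : ¬ForwardZone H v)
    (huv : Before T u v) : ¬∀ w ∈ K, ForwardZone H w → Before T v w := by
  intro hall
  obtain ⟨T', hl, hval, hk, hcl, hT'⟩ := hV.exists_extension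
  obtain ⟨w, hwK, hwF, hwu, -⟩ := hK.exists_forward_mem_Icc hu huF ⟨le_rfl, not_lt.1 huF⟩
  have hvw := hall w hwK hwF
  obtain ⟨b, hb, hwb⟩ := hk.exists_before_of_fmin_le_smax hWf hl hval (hK.1 w hwK).1
    (hK.1 u hu).1 (hK.1 w hwK).2 (hK.1 u hu).2 (fun h => huF (h ▸ hwF))
    (hcl w hvw.mem_right) (hcl u huv.mem_left) hwu
  have huv' := hT' u v huv
  have hvw' := hT' v w hvw
  exact hvF (hk.eq_of_writes_between hl (hK.1 u hu).2 hb (hK.1 v hv).2 (hK.1 w hwK).2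
    huv' (hvw'.trans hl hwb) (huv'.trans hl hvw') hwb ▸ hwF)

lemma not_forall_forward_before (hWf : Wf H) (hK : IsChunk H K) (hV : Viable H T)
    (hu : u ∈ K) (hv : v ∈ K) (hvF : ¬ForwardZone H v)
    (huv : Before T u v) : ¬∀ w ∈ K, ForwardZone H w → Before T w u := by
  intro hall
  obtain ⟨T', hl, hval, hk, hcl, hT'⟩ := hV.exists_extension
  obtain ⟨w, hwK, hwF, -, hvw⟩ := hK.exists_forward_mem_Icc hv hvF ⟨not_lt.1 hvF, le_rfl⟩
  have hwu := hall w hwK hwF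
  obtain ⟨b, hb, hvb⟩ := hk.exists_before_of_fmin_le_smax hWf hl hval (hK.1 v hv).1
    (hK.1 w hwK).1 (hK.1 v hv).2 (hK.1 w hwK).2 (fun h => hvF (h ▸ hwF))
    (hcl v huv.mem_right) (hcl w hwu.mem_left) hvw
  have huv' := hT' u v huv
  have hwu' := hT' w u hwu
  exact huv'.ne hl (hk.eq_of_writes_between hl (hK.1 w hwK).2 hb (hK.1 u hu).2 (hK.1 v hv).2
    hwu' (huv'.trans hl hvb) (hwu'.trans hl huv') hvb)

end Viable

theorem stmt_7_general (H : History) (hWf : Wf H) (K : Finset Op) (hK : MaximalChunk H K)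
    (w1 w2 : Op) (h12 : w1 ≠ w2) (hw1K : w1 ∈ K) (hw2K : w2 ∈ K)
    (hb : K.filter (fun w => ¬ ForwardZone H w) = {w1, w2})
    (T : List Op) (hT : TotalOrderOn K T) (hV : Viable H T) :
    (¬ ∀ w ∈ K, ForwardZone H w → Before T w1 w ∧ Before T w2 w) ∧
    (¬ ∀ w ∈ K, ForwardZone H w → Before T w w1 ∧ Before T w w2) := by
  have hback : ∀ w ∈ ({w1, w2} : Finset Op), ¬ForwardZone H w := by
    rw [← hb]
    exact fun w hw => (Finset.mem_filter.1 hw).2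
  have hnf1 := hback w1 (by simp)
  have hnf2 := hback w2 (by simp)
  rcases before_or_before ((hT.2.1 w1).2 hw1K) ((hT.2.1 w2).2 hw2K) h12 with h | h
  · exact ⟨fun hall => not_forall_before_forward hWf hK.1 hV hw1K hnf1 hw2K hnf2 h
        fun w hw hf => (hall w hw hf).2,
      fun hall => not_forall_forward_before hWf hK.1 hV hw1K hw2K hnf2 h
        fun w hw hf => (hall w hw hf).1⟩
  · exact ⟨fun hall => not_forall_before_forward hWf hK.1 hV hw2K hnf2 hw1K hnf1 h
        fun w hw hf => (hall w hw hf).1,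
      fun hall => not_forall_forward_before hWf hK.1 hV hw2K hw1K hnf1 h
        fun w hw hf => (hall w hw hf).2⟩

/-- Let `K` be a maximal chunk with at least one forward cluster and exactly two
backward clusters, with dictating writes `w1, w2`. In any viable total order over
all writes of `K`, `w1` and `w2` cannot both precede all writes of forward
clusters of `K`, and cannot both succeed all of them. -/
theorem stmt_7 (H : History) (hWf : Wf H) (K : Finset Op) (hK : MaximalChunk H K)
    (w1 w2 : Op) (h12 : w1 ≠ w2) (hw1K : w1 ∈ K) (hw2K : w2 ∈ K)
    (hb : K.filter (fun w => ¬ ForwardZone H w) = {w1, w2})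
    (hfwd : ∃ w ∈ K, ForwardZone H w)
    (T : List Op) (hT : TotalOrderOn K T) (hV : Viable H T) :
    (¬ ∀ w ∈ K, ForwardZone H w → Before T w1 w ∧ Before T w2 w) ∧
    (¬ ∀ w ∈ K, ForwardZone H w → Before T w w1 ∧ Before T w w2) :=
  stmt_7_general H hWf K hK w1 w2 h12 hw1K hw2K hb T hT hV
end
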